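/- For each k ≥ 1 and each m with 0 ≤ m ≤ p−1−k, the k-fold antiderivative of the right Radau polynomial is orthogonal to the Legendre polynomial P_m on [-1,1]: ∫_{-1}^1 R⁻⁽⁻ᵏ⁾_{p+1}(ξ) P_m(ξ) dξ = 0. -/

import Mathlib

/-!
Integrating by parts against an antiderivative `Q` of `q` gives
`∫ R⁽⁻⁽ᵏ⁺¹⁾⁾ q = [R⁽⁻⁽ᵏ⁺¹⁾⁾ Q]₋₁¹ - ∫ R⁽⁻ᵏ⁾ Q`. The boundary term vanishes: at `-1` by the choice of
base point, at `1` because `R⁽⁻⁽ᵏ⁺¹⁾⁾(1) = ∫ R⁽⁻ᵏ⁾ · 1`, which is zero by induction. So each antiderivative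
costs one degree of orthogonality, starting from the orthogonality of `R = P_{p+1} - P_p` to all
polynomials of degree `< p`, which comes from Rodrigues' formula by integrating by parts `p` times.
-/

open Polynomial intervalIntegral

/-- The `k`-th Legendre polynomial, defined via the Rodrigues formula. -/
noncomputable def leg (k : ℕ) : Polynomial ℝ :=
  C (1 / (2 ^ k * (k.factorial : ℝ))) * (fun q => derivative q)^[k] ((X ^ 2 - 1) ^ k)

/-- The right Radau polynomial `R⁻_{p+1} = P_{p+1} - P_p`. -/
noncomputable def radau (p : ℕ) : Polynomial ℝ := leg (p + 1) - leg p

/-- Iterated antiderivatives of the right Radau polynomial, with base point `-1`. -/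
noncomputable def radauIter (p : ℕ) : ℕ → ℝ → ℝ
  | 0 => fun ξ => (radau p).eval ξ
  | (k + 1) => fun ξ => ∫ s in (-1 : ℝ)..ξ, radauIter p k s

theorem intervalIntegral.integral_mul_deriv_eq_neg_of_eq_zero {a b : ℝ} {u v u' v' : ℝ → ℝ}
    (hu : ∀ x ∈ Set.uIcc a b, HasDerivAt u (u' x) x) (hv : ∀ x ∈ Set.uIcc a b, HasDerivAt v (v' x) x)
    (hu' : IntervalIntegrable u' MeasureTheory.volume a b)
    (hv' : IntervalIntegrable v' MeasureTheory.volume a b) (ha : u a = 0) (hb : u b = 0) :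
    ∫ x in a..b, u x * v' x = -∫ x in a..b, u' x * v x := by
  rw [integral_mul_deriv_eq_deriv_mul hu hv hu' hv', ha, hb]
  ring

namespace Polynomial

variable {K : Type*} [Field K]

noncomputable def antideriv (q : K[X]) : K[X] :=
  q.sum fun n a => C (a / (n + 1)) * X ^ (n + 1)

theorem derivative_antideriv [CharZero K] (q : K[X]) : derivative (antideriv q) = q := by
  conv_rhs => rw [← q.sum_C_mul_X_pow_eq]
  rw [antideriv, Polynomial.sum_def, Polynomial.sum_def, map_sum]
  refine Finset.sum_congr rfl fun n _ => ?_
  rw [derivative_C_mul, derivative_X_pow, Nat.add_sub_cancel, ← mul_assoc, ← C_mul]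
  congr 2
  push_cast
  field_simp

theorem natDegree_antideriv_le (q : K[X]) : (antideriv q).natDegree ≤ q.natDegree + 1 :=
  natDegree_sum_le_of_forall_le _ _ fun n hn =>
    (natDegree_C_mul_le _ _).trans <| (natDegree_X_pow_le _).trans <|
      Nat.add_le_add_right (le_natDegree_of_mem_supp n hn) 1

end Polynomial

theorem eval_iterate_derivative_sq_sub_one_pow_eq_zero {R : Type*} [CommRing R] {n j : ℕ}
    (hj : j < n) {x : R} (hx : x ^ 2 = 1) :
    (derivative^[j] ((X ^ 2 - 1 : R[X]) ^ n)).eval x = 0 := by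
  have hroot : (X - C x) ∣ (X ^ 2 - 1 : R[X]) := dvd_iff_isRoot.mpr (by simp [hx])
  have hdvd := pow_sub_dvd_iterate_derivative_of_pow_dvd j (pow_dvd_pow_of_dvd hroot n)
  exact dvd_iff_isRoot.mp <| (dvd_pow_self _ (Nat.sub_ne_zero_of_lt hj)).trans hdvd

theorem integral_iterate_derivative_sq_sub_one_pow_mul_eq_zero {n j : ℕ} (hj : j ≤ n) {q : ℝ[X]}
    (hq : q.natDegree < j) :
    ∫ x in (-1 : ℝ)..1, (derivative^[j] ((X ^ 2 - 1 : ℝ[X]) ^ n)).eval x * q.eval x = 0 := by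
  induction j generalizing q with
  | zero => omega
  | succ j ih =>
    set W := derivative^[j] ((X ^ 2 - 1 : ℝ[X]) ^ n)
    have hvanish (x : ℝ) (hx : x ^ 2 = 1) : W.eval x = 0 :=
      eval_iterate_derivative_sq_sub_one_pow_eq_zero (by omega) hx
    have hparts : ∫ x in (-1 : ℝ)..1, W.eval x * (derivative q).eval x =
        -∫ x in (-1 : ℝ)..1, (derivative W).eval x * q.eval x :=
      integral_mul_deriv_eq_neg_of_eq_zero (fun x _ => W.hasDerivAt x) (fun x _ => q.hasDerivAt x)
        ((derivative W).continuous.intervalIntegrable _ _)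
        ((derivative q).continuous.intervalIntegrable _ _) (hvanish _ (by norm_num))
        (hvanish _ (by norm_num))
    have hW_perp : ∫ x in (-1 : ℝ)..1, W.eval x * (derivative q).eval x = 0 := by
      rcases eq_or_ne (derivative q) 0 with hq' | hq'
      · simp [hq']
      · have hdeg := natDegree_derivative_lt fun h => hq' (derivative_of_natDegree_zero h)
        exact ih (by omega) (by omega)
    rw [Function.iterate_succ_apply', ← neg_eq_zero, ← hparts, hW_perp]

theorem natDegree_leg_le (m : ℕ) : (leg m).natDegree ≤ m := by
  have hW : ((X ^ 2 - 1 : ℝ[X]) ^ m).natDegree ≤ 2 * m := by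
    refine natDegree_pow_le.trans ?_
    rw [← C_1, natDegree_X_pow_sub_C, mul_comm]
  exact (natDegree_C_mul_le _ _).trans <| (natDegree_iterate_derivative _ m).trans (by omega)

theorem integral_leg_mul_eq_zero {n : ℕ} {q : ℝ[X]} (hq : q.natDegree < n) :
    ∫ x in (-1 : ℝ)..1, (leg n).eval x * q.eval x = 0 := by
  simp only [leg, eval_mul, eval_C, mul_assoc, integral_const_mul]
  rw [integral_iterate_derivative_sq_sub_one_pow_mul_eq_zero le_rfl hq, mul_zero]

theorem integral_radau_mul_eq_zero {p : ℕ} {q : ℝ[X]} (hq : q.natDegree < p) :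
    ∫ x in (-1 : ℝ)..1, (radau p).eval x * q.eval x = 0 := by
  have hint (n : ℕ) : IntervalIntegrable (fun x => (leg n).eval x * q.eval x)
      MeasureTheory.volume (-1) 1 :=
    ((leg n).continuous.mul q.continuous).intervalIntegrable _ _
  simp only [radau, eval_sub, sub_mul]
  rw [integral_sub (hint _) (hint _), integral_leg_mul_eq_zero (by omega),
    integral_leg_mul_eq_zero hq, sub_zero]

theorem continuous_radauIter (p : ℕ) : ∀ k, Continuous (radauIter p k)
  | 0 => (radau p).continuous
  | k + 1 => continuous_primitive (fun _ _ => (continuous_radauIter p k).intervalIntegrable _ _) _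

theorem hasDerivAt_radauIter_succ (p k : ℕ) (x : ℝ) :
    HasDerivAt (radauIter p (k + 1)) (radauIter p k x) x :=
  ((continuous_radauIter p k).integral_hasStrictDerivAt (-1) x).hasDerivAt

theorem integral_radauIter_mul_eq_zero (p k : ℕ) {q : ℝ[X]} (hq : q.natDegree + k + 1 ≤ p) :
    ∫ x in (-1 : ℝ)..1, radauIter p k x * q.eval x = 0 := by
  induction k generalizing q with
  | zero => exact integral_radau_mul_eq_zero (by omega)
  | succ k ih =>
    have hneg : radauIter p (k + 1) (-1) = 0 := integral_same
    have hone : radauIter p (k + 1) 1 = 0 := by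
      show ∫ x in (-1 : ℝ)..1, radauIter p k x = 0
      simpa using ih (q := 1) (by rw [natDegree_one]; omega)
    have hQ (x : ℝ) : HasDerivAt (fun x => (antideriv q).eval x) (q.eval x) x := by
      simpa only [derivative_antideriv] using (antideriv q).hasDerivAt x
    have hparts := integral_mul_deriv_eq_neg_of_eq_zero
      (fun x _ => hasDerivAt_radauIter_succ p k x) (fun x _ => hQ x)
      ((continuous_radauIter p k).intervalIntegrable _ _) (q.continuous.intervalIntegrable _ _)
      hneg hone
    rw [hparts, ih (by have := natDegree_antideriv_le q; omega), neg_zero]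

theorem radauIter_orthogonal_general (p k m : ℕ) (hm : m + k + 1 ≤ p) :
    ∫ ξ in (-1 : ℝ)..1, radauIter p k ξ * (leg m).eval ξ = 0 :=
  integral_radauIter_mul_eq_zero p k (by have := natDegree_leg_le m; omega)

theorem radauIter_orthogonal (p k m : ℕ) (hk : 1 ≤ k) (hm : m + k + 1 ≤ p) :
    ∫ ξ in (-1 : ℝ)..1, radauIter p k ξ * (leg m).eval ξ = 0 :=
  radauIter_orthogonal_general p k m hm
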